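/- Let ρ_n be the measure on 𝕋 with density Π_{j=0}^n (1 + α_j cos(ℓ_j θ)) with respect to dθ/(2π), where α_j ∈ [−1,1] and ℓ_{j+1} ≥ 3ℓ_j. Let N_n = Σ_{j=0}^n ℓ_j and P(z) = Π_{j=0}^n (z^{ℓ_j} − α_j/2), a monic polynomial of degree N_n. Then ∫_𝕋 |P|² dρ_n = Π_{j=0}^n (1 − α_j²/4). Consequently, for the Riesz product ρ = lim ρ_n, e_{N_n}(ρ)² ≤ Π_{j=0}^n (1 − α_j²/4). -/

import Mathlib

/-!
On the circle, `1 + α cos θ = z⁻¹ (α/2 + z + (α/2) z²)` and `|z - α/2|² = (z - α/2)(z⁻¹ - α/2)`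
for `z = e^{iθ}`, so the integrand of `∫ |P|² dρ_m` (for any `m ≥ n`) is
`∏_j z^{-t_j ℓ_j} q_j(z^{ℓ_j})` with polynomials `q_j` of degree `2 t_j`, `t_j ∈ {1, 2}`.
Integrating over the circle extracts the coefficient of `z^{Σ t_j ℓ_j}` in `∏_j q_j(z^{ℓ_j})`,
and lacunarity (`2 Σ_{i<j} ℓ_i < ℓ_j`) leaves only the product of the middle coefficients
`q_j[t_j]`, which are `1 - α_j²/4` for `j ≤ n` and `1` for `j > n`. The moments of `|P|²` against
`ρ_m` are thus eventually constant, so they pass to the weak limit `ρ`, and `P` is monic of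
degree `N_n`.
-/

open MeasureTheory Complex Polynomial Filter

/-- The squared Szegő minimum `e_n(ρ)²`. -/
noncomputable def szegoE2 (ρ : Measure ℂ) (n : ℕ) : ℝ :=
  sInf { x | ∃ q : Polynomial ℂ, q.Monic ∧ q.natDegree = n ∧
    x = ∫ z, ‖q.eval z‖ ^ 2 ∂ρ }

/-- The partial Riesz product `dρ_n(e^{iθ}) = Π_{j=0}^n (1 + α_j cos(ℓ_j θ)) dθ/(2π)`,
pushed forward to the unit circle. -/
noncomputable def rieszPartial (α : ℕ → ℝ) (l : ℕ → ℕ) (n : ℕ) : Measure ℂ :=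
  Measure.map (fun θ : ℝ => Complex.exp (θ * Complex.I))
    ((volume.restrict (Set.Ioc (-Real.pi) Real.pi)).withDensity fun θ =>
      ENNReal.ofReal ((2 * Real.pi)⁻¹ *
        ∏ j ∈ Finset.range (n + 1), (1 + α j * Real.cos (l j * θ))))

open Finset Real

theorem two_mul_sum_range_lt_of_lacunary {l : ℕ → ℕ} (hl : 0 < l 0)
    (hlac : ∀ j, 3 * l j ≤ l (j + 1)) (m : ℕ) : 2 * ∑ j ∈ range m, l j < l m := by
  induction m with
  | zero => simpa using hl
  | succ m ih =>
    rw [sum_range_succ]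
    linarith [hlac m]

theorem coeff_mul_expand_add_mul {R : Type*} [CommSemiring R] {A : R[X]} {T k : ℕ}
    (hT : T < k) (hA : A.natDegree < T + k) (q : R[X]) (t : ℕ) :
    (A * expand R k q).coeff (T + t * k) = A.coeff T * q.coeff t := by
  have hk : 0 < k := by omega
  rw [coeff_mul, sum_eq_single_of_mem (T, t * k) (HasAntidiagonal.mem_antidiagonal.2 rfl)]
  · rw [coeff_expand_mul hk]
  -- A smaller multiple `j` of `k` forces `i ≥ T + k > deg A`; a larger one exceeds the index.
  rintro ⟨i, j⟩ hij hne
  rw [HasAntidiagonal.mem_antidiagonal] at hij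
  rw [coeff_expand hk]
  split_ifs with hdvd
  · obtain ⟨s, rfl⟩ := hdvd
    rcases lt_trichotomy s t with hs | rfl | hs
    · have : k * s + k ≤ t * k := by nlinarith
      rw [coeff_eq_zero_of_natDegree_lt (by omega), zero_mul]
    · exact absurd (by simp only [Prod.mk.injEq]; constructor <;> linarith) hne
    · have : t * k + k ≤ k * s := by nlinarith
      omega
  · rw [mul_zero]

theorem coeff_prod_expand_of_lacunary {R : Type*} [CommSemiring R] {l : ℕ → ℕ} (hl : 0 < l 0)
    (hlac : ∀ j, 3 * l j ≤ l (j + 1)) {q : ℕ → R[X]} {t : ℕ → ℕ} (ht : ∀ j, t j ≤ 2)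
    (hq : ∀ j, (q j).natDegree ≤ 2 * t j) (m : ℕ) :
    (∏ j ∈ range m, expand R (l j) (q j)).coeff (∑ j ∈ range m, t j * l j) =
      ∏ j ∈ range m, (q j).coeff (t j) := by
  induction m with
  | zero => simp
  | succ m ih =>
    set T := ∑ j ∈ range m, t j * l j
    have hTlt : T < l m := calc
      T ≤ 2 * ∑ j ∈ range m, l j := by
        rw [mul_sum]; exact sum_le_sum fun j _ => Nat.mul_le_mul_right _ (ht j)
      _ < l m := two_mul_sum_range_lt_of_lacunary hl hlac m
    have hdeg : (∏ j ∈ range m, expand R (l j) (q j)).natDegree ≤ 2 * T := calc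
      _ ≤ ∑ j ∈ range m, (expand R (l j) (q j)).natDegree := natDegree_prod_le _ _
      _ ≤ 2 * T := by
        rw [mul_sum]
        refine sum_le_sum fun j _ => ?_
        rw [natDegree_expand, ← mul_assoc]
        exact Nat.mul_le_mul_right _ (hq j)
    rw [prod_range_succ, prod_range_succ, sum_range_succ,
      coeff_mul_expand_add_mul hTlt (by omega), ih]

theorem integral_exp_int_mul_mul_I (k : ℤ) :
    ∫ θ in Set.Ioc (-π) π, cexp (k * θ * I) = if k = 0 then (2 * π : ℂ) else 0 := by
  rw [← intervalIntegral.integral_of_le (by linarith [pi_pos])]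
  split_ifs with hk
  · simp [hk, two_mul]
  have hkI : (k : ℂ) * I ≠ 0 := by simp [hk]
  simp_rw [mul_right_comm _ _ I]
  rw [integral_exp_mul_complex hkI, ofReal_neg, mul_neg, div_eq_zero_iff, sub_eq_zero,
    Complex.exp_eq_exp_iff_exists_int]
  exact Or.inl ⟨k, by ring⟩

theorem integral_exp_neg_mul_mul_I_mul_eval (Q : ℂ[X]) (M : ℕ) :
    ∫ θ in Set.Ioc (-π) π, cexp (-M * θ * I) * Q.eval (cexp (θ * I)) = 2 * π * Q.coeff M := by
  have hN : Q.natDegree < max (Q.natDegree + 1) (M + 1) := by omega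
  have hterm (θ : ℝ) (i : ℕ) : cexp (-M * θ * I) * (Q.coeff i * cexp (θ * I) ^ i) =
      Q.coeff i * cexp (((i - M : ℤ) : ℂ) * θ * I) := by
    rw [← Complex.exp_nat_mul, mul_left_comm, ← Complex.exp_add]
    push_cast
    ring_nf
  simp_rw [eval_eq_sum_range' hN, mul_sum, hterm]
  rw [integral_finsetSum _ fun i _ => (by fun_prop : Continuous _).integrableOn_Ioc]
  simp_rw [integral_const_mul, integral_exp_int_mul_mul_I, sub_eq_zero, Nat.cast_inj, mul_ite,
    mul_zero, sum_ite_eq', mem_range]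
  rw [if_pos (by omega), mul_comm]

-- At `z = e^{iθ}`, `z⁻¹ * rieszFactor (α / 2)` evaluates to `1 + α cos θ`.
noncomputable def rieszFactor {R : Type*} [Semiring R] (b : R) : R[X] := C b + X + C b * X ^ 2

section RieszFactor

variable {R : Type*} (b : R)

theorem natDegree_rieszFactor_le [Semiring R] : (rieszFactor b).natDegree ≤ 2 := by
  unfold rieszFactor; compute_degree

theorem natDegree_mul_rieszFactor_le [Ring R] :
    ((X - C b) * (1 - C b * X) * rieszFactor b).natDegree ≤ 4 := by
  unfold rieszFactor; compute_degree

theorem coeff_rieszFactor_one [Semiring R] : (rieszFactor b).coeff 1 = 1 := by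
  simp [rieszFactor, coeff_X]

theorem coeff_mul_rieszFactor_two [CommRing R] :
    ((X - C b) * (1 - C b * X) * rieszFactor b).coeff 2 = 1 - b ^ 2 := by
  have : (X - C b) * (1 - C b * X) * rieszFactor b =
      C (-b ^ 2) + C (b ^ 3) * X + C (1 - b ^ 2) * X ^ 2 + C (b ^ 3) * X ^ 3 +
        C (-b ^ 2) * X ^ 4 := by
    simp only [rieszFactor, map_neg, map_pow, map_sub, map_one]; ring
  rw [this]
  simp only [coeff_add, coeff_C_mul, coeff_X_pow, coeff_X, coeff_C]
  norm_num

end RieszFactor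

section EvalRieszFactor

variable {K : Type*} [Field K] {v : K}

theorem one_add_mul_add_inv_eq_eval_rieszFactor (hv : v ≠ 0) (b : K) :
    1 + b * (v + v⁻¹) = v⁻¹ * (rieszFactor b).eval v := by
  simp only [rieszFactor, eval_add, eval_mul, eval_pow, eval_C, eval_X]
  field_simp
  ring

theorem sub_mul_inv_sub_mul_eq_eval_rieszFactor (hv : v ≠ 0) (b : K) :
    (v - b) * (v⁻¹ - b) * (1 + b * (v + v⁻¹)) =
      (v ^ 2)⁻¹ * ((X - C b) * (1 - C b * X) * rieszFactor b).eval v := by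
  simp only [rieszFactor, eval_add, eval_sub, eval_one, eval_mul, eval_pow, eval_C, eval_X]
  field_simp
  ring

end EvalRieszFactor

theorem ofReal_one_add_mul_cos (a φ : ℝ) :
    ((1 + a * Real.cos φ : ℝ) : ℂ) = 1 + (a / 2 : ℂ) * (cexp (φ * I) + (cexp (φ * I))⁻¹) := by
  rw [← Complex.exp_neg, ofReal_add, ofReal_one, ofReal_mul, ofReal_cos, Complex.cos, neg_mul]
  ring

theorem ofReal_norm_exp_mul_I_sub_sq (a φ : ℝ) :
    ((‖cexp (φ * I) - a / 2‖ ^ 2 : ℝ) : ℂ) =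
      (cexp (φ * I) - a / 2) * ((cexp (φ * I))⁻¹ - a / 2) := by
  rw [ofReal_pow, ← Complex.mul_conj', map_sub, ← Complex.exp_conj, map_mul, conj_ofReal, conj_I,
    mul_neg, Complex.exp_neg, map_div₀, conj_ofReal, map_ofNat]

theorem integral_prod_inv_pow_mul_eval_of_lacunary {l : ℕ → ℕ} (hl : 0 < l 0)
    (hlac : ∀ j, 3 * l j ≤ l (j + 1)) {q : ℕ → ℂ[X]} {t : ℕ → ℕ} (ht : ∀ j, t j ≤ 2)
    (hq : ∀ j, (q j).natDegree ≤ 2 * t j) (m : ℕ) :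
    ∫ θ in Set.Ioc (-π) π,
        ∏ j ∈ range m, ((cexp (θ * I) ^ l j) ^ t j)⁻¹ * (q j).eval (cexp (θ * I) ^ l j) =
      2 * π * ∏ j ∈ range m, (q j).coeff (t j) := by
  set M := ∑ j ∈ range m, t j * l j
  set Q := ∏ j ∈ range m, expand ℂ (l j) (q j)
  have hprod (θ : ℝ) :
      ∏ j ∈ range m, ((cexp (θ * I) ^ l j) ^ t j)⁻¹ * (q j).eval (cexp (θ * I) ^ l j) =
        cexp (-M * θ * I) * Q.eval (cexp (θ * I)) := by
    simp_rw [prod_mul_distrib, prod_inv_distrib, Q, eval_prod, expand_eval, ← pow_mul,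
      prod_pow_eq_pow_sum, mul_assoc, neg_mul, Complex.exp_neg, Complex.exp_nat_mul]
    simp only [M, mul_comm]
  simp_rw [hprod, integral_exp_neg_mul_mul_I_mul_eval, Q, M,
    coeff_prod_expand_of_lacunary hl hlac ht hq]

theorem one_add_mul_cos_nonneg {a : ℝ} (ha : a ∈ Set.Icc (-1 : ℝ) 1) (x : ℝ) :
    0 ≤ 1 + a * Real.cos x := by
  nlinarith [ha.1, ha.2, Real.neg_one_le_cos x, Real.cos_le_one x]

theorem integral_rieszPartial {α : ℕ → ℝ} (hα : ∀ j, α j ∈ Set.Icc (-1 : ℝ) 1) (l : ℕ → ℕ)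
    (m : ℕ) {f : ℂ → ℝ} (hf : Measurable f) :
    ∫ z, f z ∂rieszPartial α l m = ∫ θ in Set.Ioc (-π) π,
      ((2 * π)⁻¹ * ∏ j ∈ range (m + 1), (1 + α j * Real.cos (l j * θ))) * f (cexp (θ * I)) := by
  have hdens : Measurable fun θ : ℝ => ENNReal.ofReal
      ((2 * π)⁻¹ * ∏ j ∈ range (m + 1), (1 + α j * Real.cos (l j * θ))) :=
    (Continuous.measurable (by fun_prop)).ennreal_ofReal
  rw [rieszPartial, integral_map (by fun_prop) hf.aestronglyMeasurable,
    integral_withDensity_eq_integral_toReal_smul hdens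
      (ae_of_all _ fun _ => ENNReal.ofReal_lt_top)]
  refine setIntegral_congr_fun measurableSet_Ioc fun θ _ => ?_
  rw [ENNReal.toReal_ofReal (mul_nonneg (by positivity)
    (prod_nonneg fun j _ => one_add_mul_cos_nonneg (hα j) _)), smul_eq_mul]

theorem prod_range_succ_ite_le {M : Type*} [CommMonoid M] {n m : ℕ} (hnm : n ≤ m) (f : ℕ → M) :
    ∏ j ∈ range (m + 1), (if j ≤ n then f j else 1) = ∏ j ∈ range (n + 1), f j := by
  rw [← prod_filter]
  congr 1
  ext j
  simp only [mem_filter, mem_range]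
  omega

theorem integral_norm_eval_prod_sq_rieszPartial {α : ℕ → ℝ} (hα : ∀ j, α j ∈ Set.Icc (-1 : ℝ) 1)
    {l : ℕ → ℕ} (hl : 0 < l 0) (hlac : ∀ j, 3 * l j ≤ l (j + 1)) {n m : ℕ} (hnm : n ≤ m) :
    ∫ z, ‖(∏ j ∈ range (n + 1), (X ^ l j - C ((α j : ℂ) / 2))).eval z‖ ^ 2 ∂rieszPartial α l m =
      ∏ j ∈ range (n + 1), (1 - α j ^ 2 / 4) := by
  set q : ℕ → ℂ[X] := fun j => if j ≤ n then
    (X - C (α j / 2 : ℂ)) * (1 - C (α j / 2 : ℂ) * X) * rieszFactor (α j / 2 : ℂ)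
    else rieszFactor (α j / 2 : ℂ)
  set t : ℕ → ℕ := fun j => if j ≤ n then 2 else 1
  have ht (j : ℕ) : t j ≤ 2 := by simp only [t]; split_ifs <;> omega
  have hq (j : ℕ) : (q j).natDegree ≤ 2 * t j := by
    simp only [q, t]; split_ifs
    · exact natDegree_mul_rieszFactor_le _
    · exact natDegree_rieszFactor_le _
  have hcoeff (j : ℕ) : (q j).coeff (t j) = if j ≤ n then ((1 - α j ^ 2 / 4 : ℝ) : ℂ) else 1 := by
    simp only [q, t]; split_ifs
    · rw [coeff_mul_rieszFactor_two]; push_cast; ring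
    · exact coeff_rieszFactor_one _
  have hfactor (θ : ℝ) (j : ℕ) :
      (((if j ≤ n then ‖cexp (θ * I) ^ l j - α j / 2‖ ^ 2 else 1) *
        (1 + α j * Real.cos (l j * θ)) : ℝ) : ℂ) =
        ((cexp (θ * I) ^ l j) ^ t j)⁻¹ * (q j).eval (cexp (θ * I) ^ l j) := by
    have hv : cexp (θ * I) ^ l j = cexp ((l j * θ : ℝ) * I) := by
      rw [← Complex.exp_nat_mul]; push_cast; ring_nf
    rw [hv, ofReal_mul, ofReal_one_add_mul_cos]
    simp only [q, t]
    split_ifs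
    · rw [ofReal_norm_exp_mul_I_sub_sq,
        sub_mul_inv_sub_mul_eq_eval_rieszFactor (Complex.exp_ne_zero _)]
    · rw [ofReal_one, one_mul, pow_one,
        one_add_mul_add_inv_eq_eval_rieszFactor (Complex.exp_ne_zero _)]
  have hintegrand (θ : ℝ) :
      ((((2 * π)⁻¹ * ∏ j ∈ range (m + 1), (1 + α j * Real.cos (l j * θ))) *
        ‖(∏ j ∈ range (n + 1), (X ^ l j - C ((α j : ℂ) / 2))).eval (cexp (θ * I))‖ ^ 2 : ℝ) : ℂ) =
        (2 * π : ℂ)⁻¹ * ∏ j ∈ range (m + 1),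
          ((cexp (θ * I) ^ l j) ^ t j)⁻¹ * (q j).eval (cexp (θ * I) ^ l j) := by
    simp only [eval_prod, eval_sub, eval_pow, eval_X, eval_C, norm_prod]
    rw [← prod_pow, ← prod_range_succ_ite_le hnm, mul_assoc, mul_comm (∏ j ∈ range (m + 1), _),
      ← prod_mul_distrib, ofReal_mul, ofReal_prod]
    simp_rw [hfactor]
    push_cast
    rfl
  rw [integral_rieszPartial hα l m (by fun_prop)]
  apply ofReal_injective
  rw [← integral_complex_ofReal]
  simp_rw [hintegrand]
  rw [integral_const_mul, integral_prod_inv_pow_mul_eval_of_lacunary hl hlac ht hq]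
  simp_rw [hcoeff]
  rw [prod_range_succ_ite_le hnm, ← mul_assoc, inv_mul_cancel₀ (by simp [pi_ne_zero]), one_mul]
  push_cast
  rfl

theorem szegoE2_le_integral (ρ : Measure ℂ) {q : ℂ[X]} (hq : q.Monic) :
    szegoE2 ρ q.natDegree ≤ ∫ z, ‖q.eval z‖ ^ 2 ∂ρ :=
  csInf_le ⟨0, by rintro _ ⟨p, -, -, rfl⟩; exact integral_nonneg fun _ => by positivity⟩
    ⟨q, hq, rfl, rfl⟩

open Finset in
theorem stmt16 (α : ℕ → ℝ) (hα : ∀ j, α j ∈ Set.Icc (-1 : ℝ) 1)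
    (l : ℕ → ℕ) (hl : ∀ j, 0 < l j) (hlac : ∀ j, 3 * l j ≤ l (j + 1))
    (n : ℕ) :
    (∫ z, ‖(∏ j ∈ range (n + 1),
        ((Polynomial.X : Polynomial ℂ) ^ (l j) -
          Polynomial.C ((α j : ℂ) / 2))).eval z‖ ^ 2 ∂(rieszPartial α l n)) =
      (∏ j ∈ range (n + 1), (1 - α j ^ 2 / 4)) ∧
    ∀ ρ : Measure ℂ, IsProbabilityMeasure ρ →
      (∀ f : ℂ → ℝ, Continuous f →
        Filter.Tendsto (fun m => ∫ z, f z ∂(rieszPartial α l m)) Filter.atTop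
          (nhds (∫ z, f z ∂ρ))) →
      szegoE2 ρ (∑ j ∈ range (n + 1), l j) ≤
        ∏ j ∈ range (n + 1), (1 - α j ^ 2 / 4) := by
  set P : ℂ[X] := ∏ j ∈ range (n + 1), (X ^ l j - C ((α j : ℂ) / 2))
  have hmoment (m : ℕ) (hm : n ≤ m) :
      ∫ z, ‖P.eval z‖ ^ 2 ∂rieszPartial α l m = ∏ j ∈ range (n + 1), (1 - α j ^ 2 / 4) :=
    integral_norm_eval_prod_sq_rieszPartial hα (hl 0) hlac hm
  refine ⟨hmoment n le_rfl, fun ρ _ hconv => ?_⟩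
  have hmonic (j : ℕ) : (X ^ l j - C ((α j : ℂ) / 2)).Monic := monic_X_pow_sub_C _ (hl j).ne'
  have hdeg : P.natDegree = ∑ j ∈ range (n + 1), l j := by
    rw [natDegree_prod_of_monic _ _ fun j _ => hmonic j]
    exact sum_congr rfl fun j _ => natDegree_X_pow_sub_C
  have hlimit : ∫ z, ‖P.eval z‖ ^ 2 ∂ρ = ∏ j ∈ range (n + 1), (1 - α j ^ 2 / 4) :=
    tendsto_nhds_unique (hconv _ (by fun_prop))
      (tendsto_const_nhds.congr' (eventually_atTop.2 ⟨n, fun m hm => (hmoment m hm).symm⟩))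
  rw [← hdeg, ← hlimit]
  exact szegoE2_le_integral ρ (monic_prod_of_monic _ _ fun j _ => hmonic j)
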